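/- Let F be a field, q ∈ F with q + 1 ≠ 0 and q²(s−1)(t−1) − 1 ≠ 0 in F, and s, t ≥ 1 natural numbers. Then the q-distance matrix D of K_{s,t} satisfies D·L + I = 𝟙·xᵀ, i.e. for all vertices u, v: ∑_{w} D(u,w)·L(w,v) + (1 if u = v else 0) = x(v), where L and x are as defined in the context. -/

import Mathlib

/-- The `q`-distance matrix of the complete bipartite graph `K_{s,t}`,
indexed by `Fin s ⊕ Fin t`: diagonal entries are `0`, entries between the two
parts are `1`, and off-diagonal entries within a part are `q + 1`. -/
def qDistKst (F : Type*) [Field F] (q : F) (s t : ℕ) :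
    Matrix (Fin s ⊕ Fin t) (Fin s ⊕ Fin t) F :=
  Matrix.of fun u v =>
    if u = v then 0 else if u.isLeft = v.isLeft then q + 1 else 1

/-- The special vector `x` of `K_{s,t}`. -/
def xVecKst (F : Type*) [Field F] (q : F) (s t : ℕ) :
    Fin s ⊕ Fin t → F :=
  Sum.elim
    (fun _ => (q * ((t : F) - 1) - 1) /
      ((q + 1) * (q ^ 2 * ((s : F) - 1) * ((t : F) - 1) - 1)))
    (fun _ => (q * ((s : F) - 1) - 1) /
      ((q + 1) * (q ^ 2 * ((s : F) - 1) * ((t : F) - 1) - 1)))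

/-- The matrix `C` in the definition of the Laplacian-like matrix `ℒ` of
`K_{s,t}`. -/
def cMatKst (F : Type*) [Field F] (q : F) (s t : ℕ) :
    Matrix (Fin s ⊕ Fin t) (Fin s ⊕ Fin t) F :=
  Matrix.of fun u v =>
    match u, v with
    | Sum.inl _, Sum.inl _ => -q ^ 2 * ((t : F) - 1)
    | Sum.inr _, Sum.inr _ => -q ^ 2 * ((s : F) - 1)
    | _, _ => q

/-- The Laplacian-like matrix `ℒ` of `K_{s,t}`. -/
def lapKst (F : Type*) [Field F] (q : F) (s t : ℕ) :
    Matrix (Fin s ⊕ Fin t) (Fin s ⊕ Fin t) F :=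
  (1 / ((q + 1) * (q ^ 2 * ((s : F) - 1) * ((t : F) - 1) - 1))) • cMatKst F q s t
    + (1 / (q + 1)) • (1 : Matrix (Fin s ⊕ Fin t) (Fin s ⊕ Fin t) F)

/-!
Up to multiples of the identity, every matrix involved is constant on the blocks of the
partition `X ⊔ Y`: it is `M.submatrix p p` for a `2 × 2` matrix `M`, where `p` sends a vertex
to its part. Such matrices multiply like their `2 × 2` compressions with the part sizes
`diag(s, t)` inserted in between. Writing `D = D₀[p, p] - (q + 1) • 1` and `C = C₀[p, p]`, the
identity contributions to `D * ℒ + 1` cancel since `(q + 1) * (1 / (q + 1)) = 1`, so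
`D * ℒ + 1` is block constant, and its four block values are checked by field arithmetic.
-/

open Matrix Finset

theorem Matrix.submatrix_mul_submatrix_eq_submatrix_mul_diagonal_mul
    {l m l' m' ι κ R : Type*} [Fintype ι] [Fintype κ] [DecidableEq κ] [Semiring R]
    (a : Matrix l κ R) (b : Matrix κ m R) (f : l' → l) (p : ι → κ) (g : m' → m) :
    a.submatrix f p * b.submatrix p g
      = (a * diagonal (fun k => (#{i | p i = k} : R)) * b).submatrix f g := by
  ext i j
  rw [submatrix_apply, mul_apply, mul_apply]
  simp only [submatrix_apply, mul_diagonal]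
  rw [← Finset.sum_fiberwise' univ p fun k => a (f i) k * b k (g j)]
  refine Finset.sum_congr rfl fun k _ => ?_
  rw [sum_const, nsmul_eq_mul, ← mul_assoc, Nat.cast_comm]

def kstPart (s t : ℕ) : Fin s ⊕ Fin t → Fin 2 := Sum.elim (fun _ => 0) (fun _ => 1)

theorem card_filter_kstPart_eq (s t : ℕ) (k : Fin 2) :
    #{w | kstPart s t w = k} = ![s, t] k := by
  rw [Finset.card_filter]
  fin_cases k <;> simp [kstPart, Fintype.sum_sum_type]

section

variable (F : Type*) [Field F] (q : F) (s t : ℕ)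

local notation "Δ" => q ^ 2 * ((s : F) - 1) * ((t : F) - 1) - 1

def qDistBlock : Matrix (Fin 2) (Fin 2) F := !![q + 1, 1; 1, q + 1]

def cMatBlock : Matrix (Fin 2) (Fin 2) F := !![-q ^ 2 * ((t : F) - 1), q; q, -q ^ 2 * ((s : F) - 1)]

def qDistLapBlock : Matrix (Fin 2) (Fin 2) F :=
  (1 / ((q + 1) * Δ)) • (qDistBlock F q * diagonal ![(s : F), t] * cMatBlock F q s t)
    + (1 / (q + 1)) • qDistBlock F q - (1 / Δ) • cMatBlock F q s t

theorem qDistKst_eq_submatrix :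
    qDistKst F q s t
      = (qDistBlock F q).submatrix (kstPart s t) (kstPart s t) - (q + 1) • 1 := by
  ext (u | u) (v | v) <;> simp [qDistKst, qDistBlock, kstPart, one_apply] <;> split_ifs <;> ring

theorem cMatKst_eq_submatrix :
    cMatKst F q s t = (cMatBlock F q s t).submatrix (kstPart s t) (kstPart s t) := by
  ext (u | u) (v | v) <;> rfl

theorem qDistKst_mul_lapKst_add_one_eq_submatrix (hq : q + 1 ≠ 0) :
    qDistKst F q s t * lapKst F q s t + 1
      = (qDistLapBlock F q s t).submatrix (kstPart s t) (kstPart s t) := by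
  have hN : (fun k => (#{w | kstPart s t w = k} : F)) = ![(s : F), t] := by
    ext k; fin_cases k <;> simp [card_filter_kstPart_eq]
  rw [lapKst, qDistKst_eq_submatrix, cMatKst_eq_submatrix, qDistLapBlock]
  simp only [Matrix.sub_mul, Matrix.mul_add, Matrix.mul_smul, Matrix.smul_mul, Matrix.mul_one,
    Matrix.one_mul, submatrix_mul_submatrix_eq_submatrix_mul_diagonal_mul, hN, submatrix_add,
    submatrix_smul, submatrix_sub, Pi.add_apply, Pi.sub_apply, Pi.smul_apply]
  have hβ : 1 / (q + 1) * (q + 1) = 1 := one_div_mul_cancel hq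
  have hα : 1 / ((q + 1) * Δ) * (q + 1) = 1 / Δ := by
    rw [mul_comm (q + 1), ← div_div, div_mul_cancel₀ _ hq]
  linear_combination (norm := module)
    (-hα) • (cMatBlock F q s t).submatrix (kstPart s t) (kstPart s t)
      - hβ • (1 : Matrix (Fin s ⊕ Fin t) (Fin s ⊕ Fin t) F)

theorem qDistLapBlock_submatrix_eq_replicateRow (hq : q + 1 ≠ 0) (hΔ : Δ ≠ 0) :
    (qDistLapBlock F q s t).submatrix (kstPart s t) (kstPart s t)
      = replicateRow (Fin s ⊕ Fin t) (xVecKst F q s t) := by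
  ext u v
  simp only [qDistLapBlock, submatrix_apply, replicateRow_apply, Matrix.sub_apply,
    Matrix.add_apply, Matrix.smul_apply, mul_apply, Fin.sum_univ_two, diagonal_apply]
  rcases u with u | u <;> rcases v with v | v <;>
    simp [kstPart, qDistBlock, cMatBlock, xVecKst] <;> field_simp <;> ring

end

theorem qDist_mul_lap_add_one_general (F : Type*) [Field F] (q : F)
    (s t : ℕ) (hq : q + 1 ≠ 0)
    (hΔ : q ^ 2 * ((s : F) - 1) * ((t : F) - 1) - 1 ≠ 0) :
    ∀ u v, (∑ w, qDistKst F q s t u w * lapKst F q s t w v)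
        + (if u = v then 1 else 0) = xVecKst F q s t v := by
  intro u v
  have h := qDistKst_mul_lapKst_add_one_eq_submatrix F q s t hq
  rw [qDistLapBlock_submatrix_eq_replicateRow F q s t hq hΔ] at h
  exact congrFun₂ h u v

theorem qDist_mul_lap_add_one (F : Type*) [Field F] (q : F)
    (s t : ℕ) (hs : 1 ≤ s) (ht : 1 ≤ t) (hq : q + 1 ≠ 0)
    (hΔ : q ^ 2 * ((s : F) - 1) * ((t : F) - 1) - 1 ≠ 0) :
    ∀ u v, (∑ w, qDistKst F q s t u w * lapKst F q s t w v)
        + (if u = v then 1 else 0) = xVecKst F q s t v :=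
  qDist_mul_lap_add_one_general F q s t hq hΔ
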